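/- Let S be a continuous propositional logic, let S̃ be its Stone space and let θ denote the map φ ↦ φ̂. Then: (1) S̃ is a compact Hausdorff space; (2) each φ̂ : S̃ → [0,1] is continuous, and θ respects the operations, i.e. (¬φ)̂ = 1 − φ̂, (½φ)̂ = φ̂/2 and (φ∸ψ)̂ = max(φ̂ − ψ̂, 0) pointwise; (3) φ̂ = ψ̂ if and only if v(φ) = v(ψ) for every truth assignment v; (4) the image of θ is dense in C(S̃, [0,1]) with respect to the uniform (sup) metric. -/

import Mathlib

/-!
The Stone space is a closed subset of the compact cube `[0,1]^S`. For density let `K`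
(`hatClosure`) be the uniform closure of `{φ̂}`. It is closed under `¬`, `½` and `∸`, hence
under `⊓`, `⊔` and truncated addition, and contains every constant in `[0,1]` (binary
expansion). The functions `f` with `clamp f ∈ K` (`clampPreimage`) form a lattice containing
all real constants. As `clamp (f + f)` is the truncated sum of `clamp f` with itself, the
lattice is closed under doubling, so a recentred `φ̂ - c` separating two points can be made to
exceed any bounds on either side: the lattice separates points strongly. By the lattice
Stone–Weierstrass theorem it is dense, and every `[0,1]`-valued `f = clamp f` lies in `K`.
-/

namespace Stmt9

/-- A continuous propositional logic: a set equipped with a binary operation `∸` and unary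
operations `¬` and `½` (no axioms imposed). -/
structure CPL (S : Type*) where
  sub : S → S → S
  neg : S → S
  half : S → S

variable {S : Type*}

/-- A truth assignment on a continuous propositional logic: a map into `[0,1]` respecting
the connectives. -/
def CPL.IsTruthAssignment (L : CPL S) (v : S → ℝ) : Prop :=
  (∀ φ : S, v φ ∈ Set.Icc (0 : ℝ) 1) ∧
  (∀ φ : S, v (L.neg φ) = 1 - v φ) ∧
  (∀ φ : S, v (L.half φ) = v φ / 2) ∧
  (∀ φ ψ : S, v (L.sub φ ψ) = max (v φ - v ψ) 0)

/-- `φ ∧ ψ` abbreviates `φ ∸ (φ ∸ ψ)`. -/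
def CPL.land (L : CPL S) (φ ψ : S) : S := L.sub φ (L.sub φ ψ)

/-- The axiom schemes A1–A6 of continuous propositional logic. -/
inductive CPL.Axiom (L : CPL S) : S → Prop where
  | a1 (φ ψ : S) : CPL.Axiom L (L.sub (L.sub φ ψ) φ)
  | a2 (φ ψ ρ : S) : CPL.Axiom L (L.sub (L.sub (L.sub ρ φ) (L.sub ρ ψ)) (L.sub ψ φ))
  | a3 (φ ψ : S) : CPL.Axiom L (L.sub (L.land φ ψ) (L.land ψ φ))
  | a4 (φ ψ : S) : CPL.Axiom L (L.sub (L.sub φ ψ) (L.sub (L.neg ψ) (L.neg φ)))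
  | a5 (φ : S) : CPL.Axiom L (L.sub (L.half φ) (L.sub φ (L.half φ)))
  | a6 (φ : S) : CPL.Axiom L (L.sub (L.sub φ (L.half φ)) (L.half φ))

/-- Formal deduction from a set of premises `Γ`, using the axiom schemes A1–A6 and
Modus Ponens (from `φ` and `ψ ∸ φ` infer `ψ`). -/
inductive CPL.Deduces (L : CPL S) (Γ : Set S) : S → Prop where
  | ax {φ : S} : CPL.Axiom L φ → CPL.Deduces L Γ φ
  | prem {φ : S} : φ ∈ Γ → CPL.Deduces L Γ φ
  | mp {φ ψ : S} : CPL.Deduces L Γ φ → CPL.Deduces L Γ (L.sub ψ φ) → CPL.Deduces L Γ ψ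

/-- The Stone space of a continuous propositional logic: the set of truth assignments,
topologized as a subspace of `[0,1]^S ⊆ ℝ^S` with the product (pointwise convergence)
topology. -/
def CPL.StoneSpace (L : CPL S) : Type _ := {v : S → ℝ // L.IsTruthAssignment v}

instance (L : CPL S) : TopologicalSpace (CPL.StoneSpace L) :=
  inferInstanceAs (TopologicalSpace {v : S → ℝ // L.IsTruthAssignment v})

/-- `φ̂ : S̃ → [0,1]`, `φ̂(v) = v(φ)`. -/
def CPL.evalAt (L : CPL S) (φ : S) : L.StoneSpace → ℝ := fun v => v.1 φ

end Stmt9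

lemma Icc_zero_one_subset_of_isClosed {C : Set ℝ} (hC : IsClosed C) (h0 : 0 ∈ C)
    (h_one_sub : ∀ c ∈ C, 1 - c ∈ C) (h_half : ∀ c ∈ C, c / 2 ∈ C) :
    Set.Icc (0 : ℝ) 1 ⊆ C := by
  have approx : ∀ n : ℕ, ∀ c ∈ Set.Icc (0 : ℝ) 1, ∃ u ∈ C, |c - u| ≤ (1 / 2) ^ n := by
    intro n
    induction n with
    | zero => exact fun c hc => ⟨0, h0, by simpa [abs_of_nonneg hc.1] using hc.2⟩
    | succ n ih =>
      rintro c ⟨hc0, hc1⟩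
      rcases le_total c (1 / 2) with hc | hc
      · obtain ⟨u, hu, hcu⟩ := ih (2 * c) ⟨by linarith, by linarith⟩
        refine ⟨u / 2, h_half u hu, ?_⟩
        calc |c - u / 2| = |2 * c - u| / 2 := by
              rw [show c - u / 2 = (2 * c - u) / 2 by ring, abs_div, abs_two]
          _ ≤ (1 / 2) ^ (n + 1) := by rw [pow_succ]; linarith
      · obtain ⟨u, hu, hcu⟩ := ih (2 * c - 1) ⟨by linarith, by linarith⟩
        refine ⟨1 - (1 - u) / 2, h_one_sub _ (h_half _ (h_one_sub u hu)), ?_⟩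
        calc |c - (1 - (1 - u) / 2)| = |2 * c - 1 - u| / 2 := by
              rw [show c - (1 - (1 - u) / 2) = (2 * c - 1 - u) / 2 by ring, abs_div, abs_two]
          _ ≤ (1 / 2) ^ (n + 1) := by rw [pow_succ]; linarith
  intro c hc
  refine hC.closure_subset_iff.mpr subset_rfl (Metric.mem_closure_iff.mpr fun ε hε => ?_)
  obtain ⟨n, hn⟩ := exists_pow_lt_of_lt_one hε (by norm_num : (1 / 2 : ℝ) < 1)
  obtain ⟨u, hu, hcu⟩ := approx n c hc
  exact ⟨u, hu, (Real.dist_eq c u).trans_le hcu |>.trans_lt hn⟩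

namespace ContinuousMap

variable {X : Type*} [TopologicalSpace X]

lemma continuous_sup_zero : Continuous fun f : C(X, ℝ) => f ⊔ 0 :=
  continuous_postcomp ⟨fun t => t ⊔ 0, by fun_prop⟩

lemma comp_sup_of_monotone {h : C(ℝ, ℝ)} (hh : Monotone h) (f g : C(X, ℝ)) :
    h.comp (f ⊔ g) = h.comp f ⊔ h.comp g :=
  ext fun _ => hh.map_max

lemma comp_inf_of_monotone {h : C(ℝ, ℝ)} (hh : Monotone h) (f g : C(X, ℝ)) :
    h.comp (f ⊓ g) = h.comp f ⊓ h.comp g :=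
  ext fun _ => hh.map_min

def clampUnit : C(ℝ, ℝ) := ⟨fun t => max (min t 1) 0, by fun_prop⟩

lemma clampUnit_apply (t : ℝ) : clampUnit t = max (min t 1) 0 := rfl

lemma monotone_clampUnit : Monotone clampUnit :=
  fun _ _ h => max_le_max_right 0 (min_le_min_right 1 h)

lemma clampUnit_mem_Icc (t : ℝ) : clampUnit t ∈ Set.Icc (0 : ℝ) 1 :=
  ⟨le_max_right _ _, max_le (min_le_right _ _) zero_le_one⟩

lemma clampUnit_of_mem_Icc {t : ℝ} (ht : t ∈ Set.Icc (0 : ℝ) 1) : clampUnit t = t := by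
  rw [clampUnit_apply, min_eq_left ht.2, max_eq_left ht.1]

lemma clampUnit_add_self (t : ℝ) : clampUnit (t + t) = min (clampUnit t + clampUnit t) 1 := by
  simp only [clampUnit_apply, max_def, min_def]
  split_ifs <;> linarith

end ContinuousMap

namespace Stmt9

variable {S : Type*}

namespace CPL

variable (L : CPL S)

lemma isClosed_setOf_isTruthAssignment : IsClosed {v : S → ℝ | L.IsTruthAssignment v} := by
  simp only [IsTruthAssignment, Set.ofPred_and, Set.ofPred_forall]
  refine .inter (isClosed_iInter fun φ => isClosed_Icc.preimage (continuous_apply φ))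
    (.inter ?_ (.inter ?_ ?_)) <;>
  exact isClosed_iInter fun _ => by first
    | exact isClosed_eq (by fun_prop) (by fun_prop)
    | exact isClosed_iInter fun _ => isClosed_eq (by fun_prop) (by fun_prop)

instance : CompactSpace L.StoneSpace :=
  isCompact_iff_compactSpace.mp <|
    (isCompact_univ_pi fun _ => isCompact_Icc).of_isClosed_subset
      L.isClosed_setOf_isTruthAssignment fun _ hv => Set.mem_univ_pi.mpr hv.1

instance : T2Space L.StoneSpace :=
  inferInstanceAs (T2Space {v : S → ℝ // L.IsTruthAssignment v})

lemma continuous_evalAt (φ : S) : Continuous (L.evalAt φ) :=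
  (continuous_apply φ).comp continuous_subtype_val

def hat (φ : S) : C(L.StoneSpace, ℝ) := ⟨L.evalAt φ, L.continuous_evalAt φ⟩

@[simp] lemma hat_apply (φ : S) (v : L.StoneSpace) : L.hat φ v = v.1 φ := rfl

def hatClosure : Set C(L.StoneSpace, ℝ) := closure (Set.range L.hat)

lemma hat_mem_hatClosure (φ : S) : L.hat φ ∈ L.hatClosure := subset_closure ⟨φ, rfl⟩

variable {L}

lemma mem_Icc_of_mem_hatClosure {g : C(L.StoneSpace, ℝ)} (hg : g ∈ L.hatClosure)
    (v : L.StoneSpace) : g v ∈ Set.Icc (0 : ℝ) 1 := by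
  refine closure_minimal ?_ (isClosed_Icc.preimage (continuous_eval_const v)) hg
  rintro _ ⟨φ, rfl⟩
  exact v.2.1 φ

lemma one_sub_mem_hatClosure {g : C(L.StoneSpace, ℝ)} (hg : g ∈ L.hatClosure) :
    1 - g ∈ L.hatClosure := by
  refine map_mem_closure (by fun_prop) hg ?_
  rintro _ ⟨φ, rfl⟩
  exact ⟨L.neg φ, ContinuousMap.ext fun v => v.2.2.1 φ⟩

lemma half_smul_mem_hatClosure {g : C(L.StoneSpace, ℝ)} (hg : g ∈ L.hatClosure) :
    (2⁻¹ : ℝ) • g ∈ L.hatClosure := by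
  refine map_mem_closure (continuous_const_smul _) hg ?_
  rintro _ ⟨φ, rfl⟩
  exact ⟨L.half φ, ContinuousMap.ext fun v => (v.2.2.2.1 φ).trans (div_eq_inv_mul _ _)⟩

lemma sub_sup_zero_mem_hatClosure {f g : C(L.StoneSpace, ℝ)} (hf : f ∈ L.hatClosure)
    (hg : g ∈ L.hatClosure) : (f - g) ⊔ 0 ∈ L.hatClosure := by
  refine map_mem_closure₂ (f := fun f g => (f - g) ⊔ 0)
    (ContinuousMap.continuous_sup_zero.comp (continuous_fst.sub continuous_snd)) hf hg ?_
  rintro _ ⟨φ, rfl⟩ _ ⟨ψ, rfl⟩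
  exact ⟨L.sub φ ψ, ContinuousMap.ext fun v => v.2.2.2.2 φ ψ⟩

lemma inf_mem_hatClosure {f g : C(L.StoneSpace, ℝ)} (hf : f ∈ L.hatClosure)
    (hg : g ∈ L.hatClosure) : f ⊓ g ∈ L.hatClosure := by
  convert sub_sup_zero_mem_hatClosure hf (sub_sup_zero_mem_hatClosure hf hg) using 1
  ext v
  obtain ⟨hf0, -⟩ := mem_Icc_of_mem_hatClosure hf v
  obtain ⟨hg0, -⟩ := mem_Icc_of_mem_hatClosure hg v
  simp only [ContinuousMap.inf_apply, ContinuousMap.sup_apply, ContinuousMap.sub_apply,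
    ContinuousMap.zero_apply, max_def, min_def]
  split_ifs <;> linarith

lemma sup_mem_hatClosure {f g : C(L.StoneSpace, ℝ)} (hf : f ∈ L.hatClosure)
    (hg : g ∈ L.hatClosure) : f ⊔ g ∈ L.hatClosure := by
  convert one_sub_mem_hatClosure (inf_mem_hatClosure (one_sub_mem_hatClosure hf)
    (one_sub_mem_hatClosure hg)) using 1
  ext v
  simp [min_sub_sub_left]

lemma add_inf_one_mem_hatClosure {f g : C(L.StoneSpace, ℝ)} (hf : f ∈ L.hatClosure)
    (hg : g ∈ L.hatClosure) : (f + g) ⊓ 1 ∈ L.hatClosure := by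
  convert one_sub_mem_hatClosure (sub_sup_zero_mem_hatClosure (one_sub_mem_hatClosure hf) hg)
    using 1
  ext v
  simp only [ContinuousMap.inf_apply, ContinuousMap.sup_apply, ContinuousMap.sub_apply,
    ContinuousMap.add_apply, ContinuousMap.one_apply, ContinuousMap.zero_apply, max_def, min_def]
  split_ifs <;> linarith

lemma const_mem_hatClosure [Nonempty S] {c : ℝ} (hc : c ∈ Set.Icc (0 : ℝ) 1) :
    ContinuousMap.const L.StoneSpace c ∈ L.hatClosure := by
  obtain ⟨φ⟩ := ‹Nonempty S›
  refine Icc_zero_one_subset_of_isClosed (C := {c | ContinuousMap.const _ c ∈ L.hatClosure})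
    (isClosed_closure.preimage ContinuousMap.continuous_const') ?_ (fun c hc => ?_)
    (fun c hc => ?_) hc <;> simp only [Set.mem_ofPred_eq] at *
  · convert L.hat_mem_hatClosure (L.sub φ φ) using 1
    ext v
    simp [v.2.2.2.2]
  · exact one_sub_mem_hatClosure hc
  · convert half_smul_mem_hatClosure hc using 1
    ext
    simp [div_eq_inv_mul]

variable (L)

def clampPreimage : Set C(L.StoneSpace, ℝ) :=
  {f | ContinuousMap.clampUnit.comp f ∈ L.hatClosure}

variable {L}

lemma mem_clampPreimage {f : C(L.StoneSpace, ℝ)} :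
    f ∈ L.clampPreimage ↔ ContinuousMap.clampUnit.comp f ∈ L.hatClosure :=
  Iff.rfl

lemma const_mem_clampPreimage [Nonempty S] (a : ℝ) :
    ContinuousMap.const L.StoneSpace a ∈ L.clampPreimage :=
  const_mem_hatClosure (ContinuousMap.clampUnit_mem_Icc a)

lemma sup_mem_clampPreimage {f g : C(L.StoneSpace, ℝ)} (hf : f ∈ L.clampPreimage)
    (hg : g ∈ L.clampPreimage) : f ⊔ g ∈ L.clampPreimage := by
  simpa only [mem_clampPreimage,
    ContinuousMap.comp_sup_of_monotone ContinuousMap.monotone_clampUnit]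
    using sup_mem_hatClosure hf hg

lemma inf_mem_clampPreimage {f g : C(L.StoneSpace, ℝ)} (hf : f ∈ L.clampPreimage)
    (hg : g ∈ L.clampPreimage) : f ⊓ g ∈ L.clampPreimage := by
  simpa only [mem_clampPreimage,
    ContinuousMap.comp_inf_of_monotone ContinuousMap.monotone_clampUnit]
    using inf_mem_hatClosure hf hg

lemma two_pow_smul_mem_clampPreimage {f : C(L.StoneSpace, ℝ)} (hf : f ∈ L.clampPreimage)
    (n : ℕ) : (2 ^ n : ℝ) • f ∈ L.clampPreimage := by
  induction n with
  | zero => simpa using hf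
  | succ n ih =>
    rw [mem_clampPreimage] at ih ⊢
    convert add_inf_one_mem_hatClosure ih ih using 1
    ext v
    simp only [ContinuousMap.comp_apply, ContinuousMap.smul_apply, smul_eq_mul,
      ContinuousMap.inf_apply, ContinuousMap.add_apply, ContinuousMap.one_apply, pow_succ,
      mul_two, add_mul, ContinuousMap.clampUnit_add_self]

lemma exists_mem_clampPreimage_neg_pos [Nonempty S] {x y : L.StoneSpace} (hxy : x ≠ y) :
    ∃ f ∈ L.clampPreimage, f x < 0 ∧ 0 < f y := by
  obtain ⟨φ, hφ⟩ : ∃ φ, x.1 φ < y.1 φ := by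
    obtain ⟨φ, hne⟩ := Function.ne_iff.mp (Subtype.coe_ne_coe.mpr hxy)
    rcases hne.lt_or_gt with hlt | hgt
    · exact ⟨φ, hlt⟩
    · exact ⟨L.neg φ, by rw [x.2.2.1, y.2.2.1]; linarith⟩
  have hc : (x.1 φ + y.1 φ) / 2 ∈ Set.Icc (0 : ℝ) 1 :=
    ⟨by linarith [(x.2.1 φ).1], by linarith [(y.2.1 φ).2]⟩
  refine ⟨L.hat φ - ContinuousMap.const _ ((x.1 φ + y.1 φ) / 2), ?_, by simp; linarith,
    by simp; linarith⟩
  rw [mem_clampPreimage]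
  convert sub_sup_zero_mem_hatClosure (L.hat_mem_hatClosure φ) (const_mem_hatClosure hc) using 1
  ext v
  have hv := (v.2.1 φ).2
  simp only [ContinuousMap.comp_apply, ContinuousMap.sub_apply, ContinuousMap.sup_apply,
    ContinuousMap.zero_apply, ContinuousMap.const_apply, hat_apply, ContinuousMap.clampUnit_apply]
  rw [min_eq_left (by linarith [hc.1])]

lemma exists_mem_clampPreimage_apply_eq_of_le [Nonempty S] {x y : L.StoneSpace} (hxy : x ≠ y)
    {a b : ℝ} (hab : a ≤ b) : ∃ f ∈ L.clampPreimage, f x = a ∧ f y = b := by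
  obtain ⟨g, hg, hgx, hgy⟩ := exists_mem_clampPreimage_neg_pos hxy
  have hm : 0 < min (-g x) (g y) := lt_min (neg_pos.mpr hgx) hgy
  obtain ⟨n, hn⟩ := pow_unbounded_of_one_lt ((|a| + |b|) / min (-g x) (g y)) one_lt_two
  have hbig : |a| + |b| < (2 : ℝ) ^ n * min (-g x) (g y) := (div_lt_iff₀ hm).mp hn
  have hpow : (0 : ℝ) ≤ 2 ^ n := by positivity
  have hx : (2 : ℝ) ^ n * g x ≤ a := by
    nlinarith [mul_le_mul_of_nonneg_left (min_le_left (-g x) (g y)) hpow, neg_abs_le a,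
      abs_nonneg b]
  have hy : b ≤ (2 : ℝ) ^ n * g y := by
    nlinarith [mul_le_mul_of_nonneg_left (min_le_right (-g x) (g y)) hpow, le_abs_self b,
      abs_nonneg a]
  refine ⟨ContinuousMap.const _ a ⊔ ((2 ^ n : ℝ) • g ⊓ ContinuousMap.const _ b),
    sup_mem_clampPreimage (const_mem_clampPreimage a)
      (inf_mem_clampPreimage (two_pow_smul_mem_clampPreimage hg n) (const_mem_clampPreimage b)),
    ?_, ?_⟩
  · simpa using (min_le_left _ _).trans hx
  · simpa [min_eq_right hy] using hab

lemma separatesPointsStrongly_clampPreimage [Nonempty S] :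
    L.clampPreimage.SeparatesPointsStrongly := by
  intro w x y
  by_cases hxy : x = y
  · subst hxy
    exact ⟨_, const_mem_clampPreimage (w x), rfl, rfl⟩
  rcases le_total (w x) (w y) with hle | hle
  · exact exists_mem_clampPreimage_apply_eq_of_le hxy hle
  · obtain ⟨f, hf, hfy, hfx⟩ := exists_mem_clampPreimage_apply_eq_of_le (Ne.symm hxy) hle
    exact ⟨f, hf, hfx, hfy⟩

lemma mem_hatClosure_of_forall_mem_Icc [Nonempty S] {f : C(L.StoneSpace, ℝ)}
    (hf : ∀ v, f v ∈ Set.Icc (0 : ℝ) 1) : f ∈ L.hatClosure := by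
  have hdense : closure L.clampPreimage = ⊤ :=
    ContinuousMap.sublattice_closure_eq_top _ ⟨_, const_mem_clampPreimage 0⟩
      (fun _ hf _ hg => inf_mem_clampPreimage hf hg)
      (fun _ hf _ hg => sup_mem_clampPreimage hf hg) separatesPointsStrongly_clampPreimage
  have hf_clamp : ContinuousMap.clampUnit.comp f = f :=
    ContinuousMap.ext fun v => ContinuousMap.clampUnit_of_mem_Icc (hf v)
  rw [← hf_clamp, hatClosure, ← closure_closure]
  exact map_mem_closure (ContinuousMap.continuous_postcomp _) (hdense ▸ Set.mem_univ f)
    fun _ hg => hg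

end CPL

/-- Properties of the Stone space of a continuous propositional logic:
(1) it is compact Hausdorff; (2) each `φ̂` is continuous and `θ : φ ↦ φ̂` respects the
connectives; (3) `φ̂ = ψ̂` iff `v(φ) = v(ψ)` for every truth assignment `v`; (4) the image
of `θ` is dense in `C(S̃, [0,1])` for the uniform metric. -/
theorem stone_space_properties [Nonempty S] (L : CPL S) :
    CompactSpace L.StoneSpace ∧
    T2Space L.StoneSpace ∧
    (∀ φ : S, Continuous (L.evalAt φ)) ∧
    (∀ (φ : S) (v : L.StoneSpace), L.evalAt (L.neg φ) v = 1 - L.evalAt φ v) ∧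
    (∀ (φ : S) (v : L.StoneSpace), L.evalAt (L.half φ) v = L.evalAt φ v / 2) ∧
    (∀ (φ ψ : S) (v : L.StoneSpace),
      L.evalAt (L.sub φ ψ) v = max (L.evalAt φ v - L.evalAt ψ v) 0) ∧
    (∀ φ ψ : S, L.evalAt φ = L.evalAt ψ ↔ ∀ v : L.StoneSpace, v.1 φ = v.1 ψ) ∧
    (∀ f : C(L.StoneSpace, ℝ), (∀ v, f v ∈ Set.Icc (0 : ℝ) 1) →
      ∀ ε : ℝ, 0 < ε → ∃ φ : S, ∀ v : L.StoneSpace, |f v - L.evalAt φ v| ≤ ε) := by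
  refine ⟨inferInstance, inferInstance, L.continuous_evalAt, fun φ v => v.2.2.1 φ,
    fun φ v => v.2.2.2.1 φ, fun φ ψ v => v.2.2.2.2 φ ψ, fun φ ψ => funext_iff, ?_⟩
  intro f hf ε hε
  obtain ⟨_, ⟨φ, rfl⟩, hφ⟩ :=
    Metric.mem_closure_iff.mp (CPL.mem_hatClosure_of_forall_mem_Icc hf) ε hε
  refine ⟨φ, fun v => ?_⟩
  rw [← Real.dist_eq]
  exact (ContinuousMap.dist_apply_le_dist v).trans hφ.le

end Stmt9
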